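/- Let K be a commutative ring with identity and m ≥ 2. Then H^m(K) equals the subgroup of H(K) generated by {(h∘g)·h^{-1} : g ∈ N^{m−1}(K), h ∈ H(K)}, and also equals the subgroup of H(K) generated by the smaller set {((1+x)∘g)·(1+x)^{-1} : g ∈ N^{m−1}(K)}. -/

import Mathlib

/-!
For `g ∈ N^{m-1}` we have `g ≡ X mod X^m`, hence `h ∘ g ≡ h mod X^m` and every generator
`(h ∘ g) · h⁻¹` lies in `H^m`, the kernel of reduction modulo `X^m`. Conversely each
`u ∈ H^m` is already a generator of the smaller set: since `(1 + X) ∘ g = 1 + g`, the choice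
`g = X + (u - 1)(1 + X) ∈ N^{m-1}` gives `((1 + X) ∘ g) · (1 + X)⁻¹ = u`. So both generating
sets coincide with the subgroup `H^m`.
-/

open PowerSeries Finset

namespace RiordanPaper

variable {K : Type*} [CommRing K]

noncomputable def comp (f g : PowerSeries K) : PowerSeries K :=
  PowerSeries.mk fun n => ∑ d ∈ Finset.range (n + 1), coeff d f * coeff n (g ^ d)

lemma coeff_comp (f g : PowerSeries K) (n : ℕ) :
    coeff n (comp f g) = ∑ d ∈ Finset.range (n + 1), coeff d f * coeff n (g ^ d) := by
  simp [comp]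

lemma coeff_pow_eq_zero {g : PowerSeries K} (hg : constantCoeff g = 0) {n d : ℕ}
    (h : n < d) : coeff n (g ^ d) = 0 := by
  have hdvd : (X : PowerSeries K) ^ d ∣ g ^ d :=
    pow_dvd_pow_of_dvd (PowerSeries.X_dvd_iff.2 hg) d
  exact (PowerSeries.X_pow_dvd_iff.1 hdvd) n h

lemma coeff_comp_of_lt {g : PowerSeries K} (hg : constantCoeff g = 0)
    (f : PowerSeries K) {n N : ℕ} (hn : n < N) :
    coeff n (comp f g) = ∑ d ∈ Finset.range N, coeff d f * coeff n (g ^ d) := by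
  rw [coeff_comp]
  apply Finset.sum_subset
  · intro d hd
    simp only [Finset.mem_range] at hd ⊢
    omega
  · intro d _ hd'
    simp only [Finset.mem_range] at hd'
    rw [coeff_pow_eq_zero hg (by omega), mul_zero]

lemma coeff_eval₂ {g : PowerSeries K} (hg : constantCoeff g = 0)
    (P : Polynomial K) (n : ℕ) :
    coeff n (Polynomial.eval₂ C g P)
      = ∑ d ∈ Finset.range (n + 1), P.coeff d * coeff n (g ^ d) := by
  classical
  have h1 : P.natDegree < max (n + 1) (P.natDegree + 1) :=
    lt_of_lt_of_le (Nat.lt_succ_self _) (le_max_right _ _)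
  rw [Polynomial.eval₂_eq_sum_range' C h1 g, map_sum]
  have h2 : ∀ d ∈ Finset.range (max (n + 1) (P.natDegree + 1)),
      coeff n (C (P.coeff d) * g ^ d) = P.coeff d * coeff n (g ^ d) := fun d _ => by
    rw [coeff_C_mul]
  rw [Finset.sum_congr rfl h2]
  symm
  apply Finset.sum_subset
  · intro d hd
    simp only [Finset.mem_range] at hd ⊢
    omega
  · intro d _ hd'
    simp only [Finset.mem_range] at hd'
    rw [coeff_pow_eq_zero hg (by omega), mul_zero]

lemma coeff_comp_eq_eval₂_trunc {g : PowerSeries K} (hg : constantCoeff g = 0)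
    (f : PowerSeries K) {n N : ℕ} (hn : n < N) :
    coeff n (comp f g) = coeff n (Polynomial.eval₂ C g (trunc N f)) := by
  rw [coeff_eval₂ hg, coeff_comp]
  apply Finset.sum_congr rfl
  intro d hd
  simp only [Finset.mem_range] at hd
  rw [PowerSeries.coeff_trunc, if_pos (by omega)]

lemma mul_comp {g : PowerSeries K} (hg : constantCoeff g = 0) (f₁ f₂ : PowerSeries K) :
    comp (f₁ * f₂) g = comp f₁ g * comp f₂ g := by
  ext n
  have key : coeff n (comp (f₁ * f₂) g)
      = coeff n (Polynomial.eval₂ C g (trunc (n + 1) f₁ * trunc (n + 1) f₂)) := by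
    rw [coeff_eval₂ hg, coeff_comp]
    apply Finset.sum_congr rfl
    intro d hd
    simp only [Finset.mem_range] at hd
    congr 1
    rw [Polynomial.coeff_mul, PowerSeries.coeff_mul]
    apply Finset.sum_congr rfl
    intro ab hab
    replace hab := Finset.HasAntidiagonal.mem_antidiagonal.mp hab
    rw [PowerSeries.coeff_trunc, PowerSeries.coeff_trunc, if_pos (by omega), if_pos (by omega)]
  rw [key, Polynomial.eval₂_mul, PowerSeries.coeff_mul, PowerSeries.coeff_mul]
  apply Finset.sum_congr rfl
  intro ab hab
  replace hab := Finset.HasAntidiagonal.mem_antidiagonal.mp hab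
  rw [← coeff_comp_eq_eval₂_trunc hg f₁ (show ab.1 < n + 1 by omega),
    ← coeff_comp_eq_eval₂_trunc hg f₂ (show ab.2 < n + 1 by omega)]

lemma one_comp (g : PowerSeries K) : comp (1 : PowerSeries K) g = 1 := by
  ext n
  rw [coeff_comp, Finset.sum_eq_single 0]
  · simp
  · intro d _ hd0
    simp [PowerSeries.coeff_one, hd0]
  · intro h
    simp at h

lemma comp_X (f : PowerSeries K) : comp f X = f := by
  ext n
  rw [coeff_comp, Finset.sum_eq_single n]
  · rw [coeff_X_pow, if_pos rfl, mul_one]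
  · intro d _ hdn
    rw [coeff_X_pow, if_neg (fun h => hdn h.symm), mul_zero]
  · intro h
    simp at h

lemma X_comp {g : PowerSeries K} (hg : constantCoeff g = 0) : comp X g = g := by
  ext n
  rcases Nat.eq_zero_or_pos n with hn | hn
  · subst hn
    rw [coeff_comp]
    simp [PowerSeries.coeff_X, coeff_zero_eq_constantCoeff_apply, hg]
  · rw [coeff_comp, Finset.sum_eq_single 1]
    · rw [coeff_one_X, pow_one, one_mul]
    · intro d _ hd1
      rw [PowerSeries.coeff_X, if_neg hd1, zero_mul]
    · intro h
      simp only [Finset.mem_range] at h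
      omega

lemma constantCoeff_comp (f g : PowerSeries K) :
    constantCoeff (comp f g) = constantCoeff f := by
  rw [← coeff_zero_eq_constantCoeff_apply, coeff_comp]
  simp

lemma coeff_one_comp (f g : PowerSeries K) :
    coeff 1 (comp f g) = coeff 1 f * coeff 1 g := by
  rw [coeff_comp]
  have : Finset.range 2 = {0, 1} := rfl
  rw [this, Finset.sum_insert (by simp), Finset.sum_singleton, pow_zero, pow_one]
  simp [PowerSeries.coeff_one]

lemma comp_assoc {g k : PowerSeries K} (hg : constantCoeff g = 0)
    (hk : constantCoeff k = 0) (f : PowerSeries K) :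
    comp (comp f g) k = comp f (comp g k) := by
  have hpow : ∀ e : ℕ, (comp g k) ^ e = comp (g ^ e) k := by
    intro e
    induction e with
    | zero => simp [one_comp]
    | succ m ih => rw [pow_succ, pow_succ, ih, mul_comp hk]
  ext n
  rw [coeff_comp, coeff_comp]
  have L1 : ∀ d ∈ Finset.range (n + 1), coeff d (comp f g) * coeff n (k ^ d)
      = ∑ e ∈ Finset.range (n + 1), coeff e f * coeff d (g ^ e) * coeff n (k ^ d) := by
    intro d hd
    simp only [Finset.mem_range] at hd
    rw [coeff_comp_of_lt hg f hd, Finset.sum_mul]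
  rw [Finset.sum_congr rfl L1, Finset.sum_comm]
  apply Finset.sum_congr rfl
  intro e _
  rw [hpow e, coeff_comp, Finset.mul_sum]
  apply Finset.sum_congr rfl
  intro d _
  ring

/-- `h` belongs to `H^n(K)`: the coefficients in degrees `1,…,n-1` vanish
(the constant-coefficient-one condition being imposed separately). -/
def IsHn (n : ℕ) (f : PowerSeries K) : Prop := ∀ i, 0 < i → i < n → coeff i f = 0

/-- `g` belongs to `N^n(K)`: the coefficients in degrees `2,…,n` vanish
(the conditions at degree `0`, `1` being imposed separately). -/
def IsNn (n : ℕ) (g : PowerSeries K) : Prop := ∀ j, 1 < j → j ≤ n → coeff j g = 0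

/-- The group `H(K)` of power series with constant term `1`, as a subgroup of the
units of `K⟦X⟧`. -/
def Hgroup (K : Type*) [CommRing K] : Subgroup (PowerSeries K)ˣ where
  carrier := {u | constantCoeff (u : PowerSeries K) = 1}
  one_mem' := by simp
  mul_mem' := by
    intro a b ha hb
    simp only [Set.mem_setOf_eq, Units.val_mul, map_mul] at *
    rw [ha, hb, one_mul]
  inv_mem' := by
    intro a ha
    simp only [Set.mem_setOf_eq] at *
    have h1 : constantCoeff ((a : PowerSeries K) * ((a⁻¹ : (PowerSeries K)ˣ) : PowerSeries K)) = 1 := by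
      rw [Units.mul_inv, map_one]
    rw [map_mul, ha, one_mul] at h1
    exact h1


/-- The underlying power series of an element of `H(K)`. -/
def seriesOf {K : Type*} [CommRing K] (u : ↥(Hgroup K)) : PowerSeries K :=
  ((u : (PowerSeries K)ˣ) : PowerSeries K)

lemma add_comp (f₁ f₂ g : PowerSeries K) :
    comp (f₁ + f₂) g = comp f₁ g + comp f₂ g := by
  ext n
  simp [coeff_comp, add_mul, Finset.sum_add_distrib]

lemma one_add_X_comp {g : PowerSeries K} (hg : constantCoeff g = 0) :
    comp (1 + X) g = 1 + g := by
  rw [add_comp, one_comp, X_comp hg]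

lemma X_pow_dvd_comp_sub {g : PowerSeries K} {m : ℕ}
    (h : (X : PowerSeries K) ^ m ∣ g - X) (f : PowerSeries K) :
    (X : PowerSeries K) ^ m ∣ comp f g - f := by
  refine X_pow_dvd_iff.2 fun i hi => ?_
  rw [show comp f g - f = comp f g - comp f X by rw [comp_X], map_sub, coeff_comp, coeff_comp,
    ← Finset.sum_sub_distrib]
  refine Finset.sum_eq_zero fun d _ => ?_
  have hd : (X : PowerSeries K) ^ m ∣ g ^ d - X ^ d := h.trans (sub_dvd_pow_sub_pow g X d)
  rw [← mul_sub, ← map_sub, X_pow_dvd_iff.1 hd i hi, mul_zero]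

lemma isHn_iff_X_pow_dvd_sub_one {m : ℕ} {f : PowerSeries K} (hf : constantCoeff f = 1) :
    IsHn m f ↔ (X : PowerSeries K) ^ m ∣ f - 1 := by
  rw [X_pow_dvd_iff]
  constructor
  · intro h i hi
    rcases Nat.eq_zero_or_pos i with rfl | hi₀
    · simp [hf]
    · rw [map_sub, h i hi₀ hi, coeff_one, if_neg hi₀.ne', sub_zero]
  · intro h i hi₀ hi
    simpa [coeff_one, hi₀.ne'] using h i hi

lemma isNn_iff_X_pow_dvd_sub_X {m : ℕ} (hm : 2 ≤ m) {g : PowerSeries K} :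
    (constantCoeff g = 0 ∧ coeff 1 g = 1 ∧ IsNn (m - 1) g) ↔ (X : PowerSeries K) ^ m ∣ g - X := by
  rw [X_pow_dvd_iff]
  constructor
  · rintro ⟨hg₀, hg₁, hgN⟩ i hi
    rw [map_sub, coeff_X]
    rcases i with _ | _ | i
    · simp [hg₀]
    · simp [hg₁]
    · rw [hgN _ (by omega) (by omega), if_neg (by omega), sub_zero]
  · intro h
    refine ⟨?_, ?_, fun j hj₁ hjm => ?_⟩
    · simpa using h 0 (by omega)
    · simpa [sub_eq_zero] using h 1 (by omega)
    · simpa [coeff_X, show j ≠ 1 by omega] using h j (by omega)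

lemma constantCoeff_seriesOf (u : Hgroup K) : constantCoeff (seriesOf u) = 1 := u.2

lemma seriesOf_mul_seriesOf_inv (u : Hgroup K) : seriesOf u * seriesOf u⁻¹ = 1 :=
  Units.mul_inv (u : (PowerSeries K)ˣ)

lemma exists_seriesOf_eq {f : PowerSeries K} (hf : constantCoeff f = 1) :
    ∃ u : Hgroup K, seriesOf u = f :=
  ⟨⟨(isUnit_iff_constantCoeff.2 (hf ▸ isUnit_one)).unit, hf⟩, rfl⟩

noncomputable def HmSubgroup (K : Type*) [CommRing K] (m : ℕ) : Subgroup (Hgroup K) :=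
  ((Units.map (Ideal.Quotient.mk (Ideal.span {(X : PowerSeries K) ^ m})).toMonoidHom).comp
    (Hgroup K).subtype).ker

lemma mem_HmSubgroup {m : ℕ} {u : Hgroup K} : u ∈ HmSubgroup K m ↔ IsHn m (seriesOf u) := by
  rw [isHn_iff_X_pow_dvd_sub_one (constantCoeff_seriesOf u), HmSubgroup, MonoidHom.mem_ker,
    Units.ext_iff]
  exact (Ideal.Quotient.mk_eq_one_iff_sub_mem _).trans Ideal.mem_span_singleton

lemma isHn_comp_mul_inv {m : ℕ} {g : PowerSeries K} (hg : (X : PowerSeries K) ^ m ∣ g - X)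
    (v : Hgroup K) : IsHn m (comp (seriesOf v) g * seriesOf v⁻¹) := by
  have hv := seriesOf_mul_seriesOf_inv v
  have hconst : constantCoeff (comp (seriesOf v) g * seriesOf v⁻¹) = 1 := by
    rw [map_mul, constantCoeff_comp, ← map_mul, hv, map_one]
  rw [isHn_iff_X_pow_dvd_sub_one hconst]
  have hkey : comp (seriesOf v) g * seriesOf v⁻¹ - 1
      = (comp (seriesOf v) g - seriesOf v) * seriesOf v⁻¹ := by
    linear_combination hv
  rw [hkey]
  exact (X_pow_dvd_comp_sub hg _).mul_right _

lemma exists_eq_one_add_X_comp_mul_inv {m : ℕ} {u : Hgroup K} (hu : IsHn m (seriesOf u)) :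
    ∃ g : PowerSeries K, (X : PowerSeries K) ^ m ∣ g - X ∧ ∃ v : Hgroup K,
      seriesOf v = 1 + X ∧ seriesOf u = comp (seriesOf v) g * seriesOf v⁻¹ := by
  rw [isHn_iff_X_pow_dvd_sub_one (constantCoeff_seriesOf u)] at hu
  obtain ⟨v, hv⟩ := exists_seriesOf_eq (f := (1 + X : PowerSeries K)) (by simp)
  set g := X + (seriesOf u - 1) * (1 + X) with hg
  have hg₀ : constantCoeff g = 0 := by simp [hg, constantCoeff_seriesOf]
  refine ⟨g, by simpa [hg] using hu.mul_right (1 + X), v, hv, ?_⟩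
  rw [hv, one_add_X_comp hg₀, show 1 + g = seriesOf u * seriesOf v by rw [hv, hg]; ring,
    mul_assoc, seriesOf_mul_seriesOf_inv, mul_one]

/-- for `m ≥ 2`, `H^m(K)` equals the subgroup of `H(K)` generated by
`{(h∘g)·h⁻¹ : g ∈ N^{m-1}(K), h ∈ H(K)}`, and also the subgroup generated by
`{((1+x)∘g)·(1+x)⁻¹ : g ∈ N^{m-1}(K)}`. -/
theorem Hm_eq_closure (K : Type*) [CommRing K] (m : ℕ) (hm : 2 ≤ m) :
    ((Subgroup.closure {u : ↥(Hgroup K) | ∃ g : PowerSeries K,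
        constantCoeff g = 0 ∧ coeff 1 g = 1 ∧ IsNn (m - 1) g ∧
        ∃ v : ↥(Hgroup K), seriesOf u = comp (seriesOf v) g * seriesOf v⁻¹} :
          Set ↥(Hgroup K))
      = {u : ↥(Hgroup K) | IsHn m (seriesOf u)}) ∧
    ((Subgroup.closure {u : ↥(Hgroup K) | ∃ g : PowerSeries K,
        constantCoeff g = 0 ∧ coeff 1 g = 1 ∧ IsNn (m - 1) g ∧
        ∃ v : ↥(Hgroup K), seriesOf v = 1 + X ∧
          seriesOf u = comp (seriesOf v) g * seriesOf v⁻¹} :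
          Set ↥(Hgroup K))
      = {u : ↥(Hgroup K) | IsHn m (seriesOf u)}) := by
  have hHm : {u : Hgroup K | IsHn m (seriesOf u)} = HmSubgroup K m :=
    Set.ext fun _ => mem_HmSubgroup.symm
  rw [hHm]
  constructor <;>
    refine congrArg _ (Subgroup.closure_eq_of_le _ ?_ fun u hu => Subgroup.subset_closure ?_)
  · rintro u ⟨g, hg₀, hg₁, hgN, v, huv⟩
    exact mem_HmSubgroup.2
      (huv ▸ isHn_comp_mul_inv ((isNn_iff_X_pow_dvd_sub_X hm).1 ⟨hg₀, hg₁, hgN⟩) v)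
  · obtain ⟨g, hg, v, -, huv⟩ := exists_eq_one_add_X_comp_mul_inv (mem_HmSubgroup.1 hu)
    obtain ⟨hg₀, hg₁, hgN⟩ := (isNn_iff_X_pow_dvd_sub_X hm).2 hg
    exact ⟨g, hg₀, hg₁, hgN, v, huv⟩
  · rintro u ⟨g, hg₀, hg₁, hgN, v, -, huv⟩
    exact mem_HmSubgroup.2
      (huv ▸ isHn_comp_mul_inv ((isNn_iff_X_pow_dvd_sub_X hm).1 ⟨hg₀, hg₁, hgN⟩) v)
  · obtain ⟨g, hg, v, hv, huv⟩ := exists_eq_one_add_X_comp_mul_inv (mem_HmSubgroup.1 hu)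
    obtain ⟨hg₀, hg₁, hgN⟩ := (isNn_iff_X_pow_dvd_sub_X hm).2 hg
    exact ⟨g, hg₀, hg₁, hgN, v, hv, huv⟩

end RiordanPaper
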